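/- Let A_{2n-1} = n+1, A_{2n} = n + 3n², B_{2n-1} = n, B_{2n} = n² (for n ≥ 1). Then for any sequence {w_n} taking values in {1, 2} (or more generally any bounded sequence of positive reals bounded away from 0), both (A_{2n} + w_{2n} A_{2n-1})/(B_{2n} + w_{2n} B_{2n-1}) → 3 and (A_{2n+1} + w_{2n+1} A_{2n})/(B_{2n+1} + w_{2n+1} B_{2n}) → 3 as n → ∞. Consequently the continued fraction with these convergents converges generally to 3, even though its odd approximants tend to 1 and its even approximants tend to 3. -/

import Mathlib

open Filter Topology

/-- The chordal metric on the Riemann sphere `ℂ ∪ {∞}`, modelled as `Option ℂ`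
with `none = ∞`. -/
noncomputable def chordal : Option ℂ → Option ℂ → ℝ
  | some w, some z =>
      ‖z - w‖ /
        (Real.sqrt (1 + ‖w‖ ^ 2) * Real.sqrt (1 + ‖z‖ ^ 2))
  | some w, none => 1 / Real.sqrt (1 + ‖w‖ ^ 2)
  | none, some z => 1 / Real.sqrt (1 + ‖z‖ ^ 2)
  | none, none => 0

/-- The modified approximant `S_n(w) = (A n + w A (n-1))/(B n + w B (n-1))` on the
Riemann sphere `Option ℂ` (here `A`, `B` are indexed directly by the subscript,
using truncated subtraction for `n - 1`). -/
noncomputable def modApprox (A B : ℕ → ℂ) (n : ℕ) : Option ℂ → Option ℂ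
  | some w =>
      if B n + w * B (n - 1) = 0 then none
      else some ((A n + w * A (n - 1)) / (B n + w * B (n - 1)))
  | none => if B (n - 1) = 0 then none else some (A (n - 1) / B (n - 1))

/-!
Write `S_n(w)` for the modified approximant. For `n ≥ 1`,
`S_{2n}(w) - 3 = (n + w - 2wn) / (n² + wn)` and `S_{2n+1}(w) - 3 = (wn - 2n - 1) / (n + 1 + wn²)`.
The first is `O(1/n)` as soon as `0 ≤ w ≤ M`, the second as soon as moreover `w ≥ δ > 0`, so
`S_n(w_n) → 3` along both parities. Taking `w_n ≡ 1` and `w_n ≡ 2` gives general convergence,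
and `w = 0` gives the even approximants `A_{2n}/B_{2n} = 3 + 1/n`.
-/

theorem tendsto_atTop_of_even_of_odd {X : Type*} {f : ℕ → X} {l : Filter X}
    (he : Tendsto (fun n => f (2 * n)) atTop l) (ho : Tendsto (fun n => f (2 * n + 1)) atTop l) :
    Tendsto f atTop l := by
  rw [tendsto_atTop'] at he ho ⊢
  intro s hs
  obtain ⟨N₁, h₁⟩ := he s hs
  obtain ⟨N₂, h₂⟩ := ho s hs
  refine ⟨2 * max N₁ N₂, fun n hn => ?_⟩
  obtain ⟨m, rfl | rfl⟩ := Nat.even_or_odd' n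
  · exact h₁ m (by omega)
  · exact h₂ m (by omega)

theorem tendsto_of_eventually_abs_sub_le_div {x : ℕ → ℝ} {L C : ℝ}
    (h : ∀ᶠ n : ℕ in atTop, |x n - L| ≤ C / n) : Tendsto x atTop (𝓝 L) :=
  tendsto_sub_nhds_zero_iff.mp <|
    squeeze_zero_norm' (by simpa only [Real.norm_eq_abs] using h)
      (tendsto_const_div_atTop_nhds_zero_nat C)

lemma abs_even_approx_sub_three_le {n w M : ℝ} (hn : 1 ≤ n) (hw : 0 ≤ w) (hwM : w ≤ M) :
    |(n + 3 * n ^ 2 + w * (n + 1)) / (n ^ 2 + w * n) - 3| ≤ (1 + 2 * M) / n := by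
  have hden : 0 < n ^ 2 + w * n := by positivity
  rw [div_sub' hden.ne', abs_div, abs_of_pos hden, div_le_div_iff₀ hden (by linarith)]
  have hnum : |n + 3 * n ^ 2 + w * (n + 1) - (n ^ 2 + w * n) * 3| ≤ (1 + 2 * M) * n := by
    rw [abs_le]
    constructor <;> nlinarith
  nlinarith [abs_nonneg (n + 3 * n ^ 2 + w * (n + 1) - (n ^ 2 + w * n) * 3)]

lemma abs_odd_approx_sub_three_le {n w δ M : ℝ} (hn : 1 ≤ n) (hδ : 0 < δ) (hδw : δ ≤ w)
    (hwM : w ≤ M) :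
    |(n + 2 + w * (n + 3 * n ^ 2)) / (n + 1 + w * n ^ 2) - 3| ≤ (M + 3) / δ / n := by
  have hden : 0 < n + 1 + w * n ^ 2 := by nlinarith
  rw [div_div, div_sub' hden.ne', abs_div, abs_of_pos hden,
    div_le_div_iff₀ hden (by positivity)]
  have hnum : |n + 2 + w * (n + 3 * n ^ 2) - (n + 1 + w * n ^ 2) * 3| ≤ (M + 3) * n := by
    rw [abs_le]
    constructor <;> nlinarith
  have hMn : 0 ≤ (M + 3) * n := by nlinarith
  calc |n + 2 + w * (n + 3 * n ^ 2) - (n + 1 + w * n ^ 2) * 3| * (δ * n)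
      ≤ (M + 3) * n * (w * n) := by gcongr
    _ ≤ (M + 3) * (n + 1 + w * n ^ 2) := by nlinarith

lemma tendsto_even_approx_real {w : ℕ → ℝ} {M : ℝ} (hw : ∀ n, 0 ≤ w n) (hwM : ∀ n, w n ≤ M) :
    Tendsto (fun n : ℕ => ((n : ℝ) + 3 * n ^ 2 + w n * (n + 1)) / ((n : ℝ) ^ 2 + w n * n))
      atTop (𝓝 3) :=
  tendsto_of_eventually_abs_sub_le_div <| (eventually_ge_atTop 1).mono fun n hn =>
    abs_even_approx_sub_three_le (by exact_mod_cast hn) (hw n) (hwM n)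

lemma tendsto_odd_approx_real {w : ℕ → ℝ} {δ M : ℝ} (hδ : 0 < δ) (hδw : ∀ n, δ ≤ w n)
    (hwM : ∀ n, w n ≤ M) :
    Tendsto (fun n : ℕ => ((n : ℝ) + 2 + w n * (n + 3 * n ^ 2)) / ((n : ℝ) + 1 + w n * n ^ 2))
      atTop (𝓝 3) :=
  tendsto_of_eventually_abs_sub_le_div <| (eventually_ge_atTop 1).mono fun n hn =>
    abs_odd_approx_sub_three_le (by exact_mod_cast hn) hδ (hδw n) (hwM n)

lemma chordal_some_le_norm_sub (x y : ℂ) : chordal (some x) (some y) ≤ ‖x - y‖ :=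
  (div_le_self (norm_nonneg _) <| one_le_mul_of_one_le_of_one_le
    (Real.one_le_sqrt.mpr (by simp)) (Real.one_le_sqrt.mpr (by simp))).trans_eq (norm_sub_rev _ _)

lemma chordal_some_pos {x y : ℂ} (h : x ≠ y) : 0 < chordal (some x) (some y) :=
  div_pos (norm_pos_iff.mpr (sub_ne_zero.mpr h.symm)) (by positivity)

lemma tendsto_chordal_some {α : Type*} {l : Filter α} {z : α → ℂ} {a : ℂ}
    (h : Tendsto z l (𝓝 a)) : Tendsto (fun i => chordal (some (z i)) (some a)) l (𝓝 0) :=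
  squeeze_zero (fun _ => div_nonneg (norm_nonneg _) (by positivity))
    (fun _ => chordal_some_le_norm_sub _ _) (tendsto_iff_norm_sub_tendsto_zero.mp h)

section ExampleFraction

variable {A B : ℕ → ℂ}
  (hAo : ∀ n : ℕ, A (2 * n + 1) = (n : ℂ) + 2)
  (hAe : ∀ n : ℕ, 1 ≤ n → A (2 * n) = (n : ℂ) + 3 * n ^ 2)
  (hBo : ∀ n : ℕ, B (2 * n + 1) = (n : ℂ) + 1)
  (hBe : ∀ n : ℕ, 1 ≤ n → B (2 * n) = (n : ℂ) ^ 2)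

include hAo hAe hBo hBe

lemma even_approx_terms (w : ℂ) {n : ℕ} (hn : 1 ≤ n) :
    A (2 * n) + w * A (2 * n - 1) = n + 3 * n ^ 2 + w * (n + 1) ∧
      B (2 * n) + w * B (2 * n - 1) = n ^ 2 + w * n := by
  obtain ⟨m, rfl⟩ := Nat.exists_eq_add_of_le' hn
  rw [show 2 * (m + 1) - 1 = 2 * m + 1 by omega, hAe _ hn, hBe _ hn, hAo, hBo]
  push_cast
  constructor <;> ring

lemma odd_approx_terms (w : ℂ) {n : ℕ} (hn : 1 ≤ n) :
    A (2 * n + 1) + w * A (2 * n) = n + 2 + w * (n + 3 * n ^ 2) ∧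
      B (2 * n + 1) + w * B (2 * n) = n + 1 + w * n ^ 2 := by
  rw [hAo, hBo, hAe _ hn, hBe _ hn]
  exact ⟨rfl, rfl⟩

lemma tendsto_even_approx {w : ℕ → ℝ} {M : ℝ} (hw : ∀ n, 0 ≤ w n) (hwM : ∀ n, w n ≤ M) :
    Tendsto (fun n : ℕ =>
        (A (2 * n) + (w (2 * n) : ℂ) * A (2 * n - 1)) /
          (B (2 * n) + (w (2 * n) : ℂ) * B (2 * n - 1))) atTop (𝓝 3) := by
  refine (tendsto_even_approx_real (fun n => hw (2 * n))
    fun n => hwM (2 * n)).ofReal.congr' ((eventually_ge_atTop 1).mono fun n hn => ?_)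
  obtain ⟨hnum, hden⟩ := even_approx_terms hAo hAe hBo hBe _ hn
  dsimp only
  rw [hnum, hden]
  push_cast
  ring

lemma tendsto_odd_approx {w : ℕ → ℝ} {δ M : ℝ} (hδ : 0 < δ) (hδw : ∀ n, δ ≤ w n)
    (hwM : ∀ n, w n ≤ M) :
    Tendsto (fun n : ℕ =>
        (A (2 * n + 1) + (w (2 * n + 1) : ℂ) * A (2 * n)) /
          (B (2 * n + 1) + (w (2 * n + 1) : ℂ) * B (2 * n))) atTop (𝓝 3) := by
  refine (tendsto_odd_approx_real hδ (fun n => hδw (2 * n + 1))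
    fun n => hwM (2 * n + 1)).ofReal.congr' ((eventually_ge_atTop 1).mono fun n hn => ?_)
  obtain ⟨hnum, hden⟩ := odd_approx_terms hAo hAe hBo hBe _ hn
  dsimp only
  rw [hnum, hden]
  push_cast
  ring

lemma modApprox_some_of_nonneg {c : ℝ} (hc : 0 ≤ c) {n : ℕ} (hn : 2 ≤ n) :
    modApprox A B n (some c) = some ((A n + c * A (n - 1)) / (B n + c * B (n - 1))) := by
  suffices hden : B n + c * B (n - 1) ≠ 0 by simp [modApprox, hden]
  obtain ⟨m, rfl | rfl⟩ := Nat.even_or_odd' n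
  · have hm : 1 ≤ m := by omega
    have hm' : (1 : ℝ) ≤ m := by exact_mod_cast hm
    rw [(even_approx_terms hAo hAe hBo hBe _ hm).2]
    exact_mod_cast (by nlinarith : (0 : ℝ) < m ^ 2 + c * m).ne'
  · rw [Nat.add_sub_cancel, (odd_approx_terms hAo hAe hBo hBe _ (by omega : 1 ≤ m)).2]
    exact_mod_cast (by positivity : (0 : ℝ) < m + 1 + c * m ^ 2).ne'

lemma tendsto_chordal_modApprox_some {c : ℝ} (hc : 0 < c) :
    Tendsto (fun n => chordal (modApprox A B n (some c)) (some 3)) atTop (𝓝 0) := by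
  have hS : Tendsto (fun n => (A n + c * A (n - 1)) / (B n + c * B (n - 1))) atTop (𝓝 3) := by
    refine tendsto_atTop_of_even_of_odd ?_ ?_
    · exact tendsto_even_approx hAo hAe hBo hBe (w := fun _ => c) (fun _ => hc.le) fun _ => le_rfl
    · simpa only [Nat.add_sub_cancel] using
        tendsto_odd_approx hAo hAe hBo hBe (w := fun _ => c) hc (fun _ => le_rfl) fun _ => le_rfl
  refine (tendsto_chordal_some hS).congr' ((eventually_ge_atTop 2).mono fun n hn => ?_)
  simp only [modApprox_some_of_nonneg hAo hAe hBo hBe hc.le hn]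

end ExampleFraction

lemma tendsto_natCast_add_two_div_add_one :
    Tendsto (fun n : ℕ => ((n : ℂ) + 2) / (n + 1)) atTop (𝓝 1) := by
  have h : Tendsto (fun n : ℕ => 1 + 1 / ((n : ℂ) + 1)) atTop (𝓝 (1 + 0)) :=
    tendsto_const_nhds.add tendsto_one_div_add_atTop_nhds_zero_nat
  refine (add_zero (1 : ℂ) ▸ h).congr fun n => ?_
  have : (n : ℂ) + 1 ≠ 0 := by exact_mod_cast n.succ_ne_zero
  field_simp
  ring

/-- Let `A_{2n-1} = n+1`, `A_{2n} = n+3n²`, `B_{2n-1} = n`, `B_{2n} = n²`.  For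
any sequence `w` of positive reals bounded away from `0` and bounded above, both
`(A_{2n} + w_{2n} A_{2n-1})/(B_{2n} + w_{2n} B_{2n-1}) → 3` and
`(A_{2n+1} + w_{2n+1} A_{2n})/(B_{2n+1} + w_{2n+1} B_{2n}) → 3`.  Consequently
the continued fraction with these convergents converges generally to `3`, even
though its odd approximants tend to `1` and its even approximants tend to `3`. -/
theorem example_general_convergence
    (A B : ℕ → ℂ)
    (hAo : ∀ n : ℕ, A (2 * n + 1) = (n : ℂ) + 2)
    (hAe : ∀ n : ℕ, 1 ≤ n → A (2 * n) = (n : ℂ) + 3 * n ^ 2)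
    (hBo : ∀ n : ℕ, B (2 * n + 1) = (n : ℂ) + 1)
    (hBe : ∀ n : ℕ, 1 ≤ n → B (2 * n) = (n : ℂ) ^ 2) :
    (∀ w : ℕ → ℝ, (∃ δ > (0 : ℝ), ∀ n, δ ≤ w n) → (∃ M : ℝ, ∀ n, w n ≤ M) →
      Tendsto (fun n : ℕ =>
          (A (2 * n) + (w (2 * n) : ℂ) * A (2 * n - 1)) /
            (B (2 * n) + (w (2 * n) : ℂ) * B (2 * n - 1))) atTop (𝓝 3) ∧
      Tendsto (fun n : ℕ =>
          (A (2 * n + 1) + (w (2 * n + 1) : ℂ) * A (2 * n)) /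
            (B (2 * n + 1) + (w (2 * n + 1) : ℂ) * B (2 * n))) atTop (𝓝 3)) ∧
    (∃ v u : ℕ → Option ℂ,
      0 < Filter.liminf (fun n => chordal (v n) (u n)) atTop ∧
      Tendsto (fun n => chordal (modApprox A B n (v n)) (some 3)) atTop (𝓝 0) ∧
      Tendsto (fun n => chordal (modApprox A B n (u n)) (some 3)) atTop (𝓝 0)) ∧
    Tendsto (fun n : ℕ => A (2 * n + 1) / B (2 * n + 1)) atTop (𝓝 1) ∧
    Tendsto (fun n : ℕ => A (2 * n) / B (2 * n)) atTop (𝓝 3) := by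
  refine ⟨fun w ⟨δ, hδ, hδw⟩ ⟨M, hwM⟩ =>
      ⟨tendsto_even_approx hAo hAe hBo hBe (fun n => hδ.le.trans (hδw n)) hwM,
        tendsto_odd_approx hAo hAe hBo hBe hδ hδw hwM⟩,
    ⟨fun _ => some 1, fun _ => some 2, ?_, ?_, ?_⟩, ?_, ?_⟩
  · rw [liminf_const]
    exact chordal_some_pos (by norm_num)
  · exact_mod_cast tendsto_chordal_modApprox_some hAo hAe hBo hBe one_pos
  · exact_mod_cast tendsto_chordal_modApprox_some hAo hAe hBo hBe two_pos
  · simpa only [hAo, hBo] using tendsto_natCast_add_two_div_add_one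
  · simpa using tendsto_even_approx hAo hAe hBo hBe (w := fun _ => 0) (fun _ => le_rfl)
      fun _ => le_rfl
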